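/- arXiv:2508.00523 — 4 statements merged into one kernel-verified Lean document; each statement's English description precedes it below -/
import Mathlib

section
/- Let n ≥ 1, α, β ∈ (0,1], and let f = f̄ − f̲ where f̄ : 2^{[n]} → ℝ is normalized, nondecreasing and α-weakly DR-submodular, and f̲ : 2^{[n]} → ℝ is normalized, nondecreasing and β-weakly DR-supermodular. Fix any x ∈ [0,1]^n and let g = g(x;f) be the chain gradient of f at x. Then for every subset A ⊆ [n]: ∑_{i ∈ A} g_i ≤ (1/α)·f̄(A) − β·f̲(A). -/
open Finset

/-- The chain set `A_i = {π(0), …, π(i-1)}` determined by a permutation `π` of `Fin n`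
(0-indexed version of `{π(1), …, π(i)}`). -/
def chainSet {n : ℕ} (π : Equiv.Perm (Fin n)) (i : ℕ) : Finset (Fin n) :=
  Finset.univ.filter fun j => (π.symm j : ℕ) < i

/-- Extended sorted coordinates: `extCoord x π 0 = 1`, `extCoord x π i = x (π (i-1))`
for `1 ≤ i ≤ n`, and `extCoord x π i = 0` for `i > n`. -/
def extCoord {n : ℕ} (x : Fin n → ℝ) (π : Equiv.Perm (Fin n)) (i : ℕ) : ℝ :=
  if h : 1 ≤ i ∧ i ≤ n then x (π ⟨i - 1, by omega⟩) else if i = 0 then 1 else 0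

/-- The weight `λ_i = x_{π(i)} - x_{π(i+1)}` (with the conventions `x_{π(0)} = 1`,
`x_{π(n+1)} = 0`). -/
def chainWeight {n : ℕ} (x : Fin n → ℝ) (π : Equiv.Perm (Fin n)) (i : ℕ) : ℝ :=
  extCoord x π i - extCoord x π (i + 1)

/-- The Lovász-extension formula `∑_{i=0}^n λ_i f(A_i)` evaluated with permutation `π`. -/
def lovasz {n : ℕ} (f : Finset (Fin n) → ℝ) (x : Fin n → ℝ) (π : Equiv.Perm (Fin n)) : ℝ :=
  ∑ i ∈ Finset.range (n + 1), chainWeight x π i * f (chainSet π i)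

/-- `π` sorts the coordinates of `x` in nonincreasing order. -/
def isSorting {n : ℕ} (x : Fin n → ℝ) (π : Equiv.Perm (Fin n)) : Prop :=
  ∀ i j : Fin n, i ≤ j → x (π j) ≤ x (π i)

/-- The chain gradient `g(x; f)`, defined by `g_{π(i)} = f(A_i) - f(A_{i-1})`. -/
def chainGrad {n : ℕ} (f : Finset (Fin n) → ℝ) (π : Equiv.Perm (Fin n)) : Fin n → ℝ :=
  fun j => f (chainSet π ((π.symm j : ℕ) + 1)) - f (chainSet π (π.symm j : ℕ))

/-- Membership in the unit hypercube `[0,1]^n`. -/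
def inCube {n : ℕ} (x : Fin n → ℝ) : Prop := ∀ i, 0 ≤ x i ∧ x i ≤ 1

/-- `f` is normalized: `f ∅ = 0`. -/
def normalizedF {n : ℕ} (f : Finset (Fin n) → ℝ) : Prop := f ∅ = 0

/-- `f` is nondecreasing. -/
def nondecreasingF {n : ℕ} (f : Finset (Fin n) → ℝ) : Prop :=
  ∀ A B : Finset (Fin n), A ⊆ B → f A ≤ f B

/-- The marginal gain `f(i | S) = f(S ∪ {i}) - f(S)`. -/
def marginal {n : ℕ} (f : Finset (Fin n) → ℝ) (i : Fin n) (S : Finset (Fin n)) : ℝ :=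
  f (insert i S) - f S

/-- `f` is `α`-weakly DR-submodular: `f(i|A) ≥ α f(i|B)` for all `A ⊆ B`, `i ∉ B`. -/
def weaklyDRSub {n : ℕ} (α : ℝ) (f : Finset (Fin n) → ℝ) : Prop :=
  ∀ A B : Finset (Fin n), A ⊆ B → ∀ i ∉ B, α * marginal f i B ≤ marginal f i A

/-- `f` is `β`-weakly DR-supermodular: `f(i|B) ≥ β f(i|A)` for all `A ⊆ B`, `i ∉ B`. -/
def weaklyDRSuper {n : ℕ} (β : ℝ) (f : Finset (Fin n) → ℝ) : Prop :=
  ∀ A B : Finset (Fin n), A ⊆ B → ∀ i ∉ B, β * marginal f i A ≤ marginal f i B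

lemma chainSet_succ {n : ℕ} (π : Equiv.Perm (Fin n)) (i : Fin n) :
    chainSet π ((π.symm i : ℕ) + 1) = insert i (chainSet π (π.symm i : ℕ)) := by
  ext j
  simp only [chainSet, Finset.mem_filter, Finset.mem_univ, true_and, Finset.mem_insert]
  constructor
  · intro h
    rcases Nat.lt_succ_iff_lt_or_eq.mp h with h | h
    · exact Or.inr h
    · exact Or.inl (π.symm.injective (Fin.ext h))
  · rintro (rfl | h) <;> omega

lemma telescope_sum {n : ℕ} (f : Finset (Fin n) → ℝ) (π : Equiv.Perm (Fin n))
    (A : Finset (Fin n)) :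
    ∑ i ∈ A, (f (insert i (A ∩ chainSet π (π.symm i : ℕ)))
        - f (A ∩ chainSet π (π.symm i : ℕ))) = f A - f ∅ := by
  induction A using Finset.strongInduction with
  | _ A ih =>
    rcases A.eq_empty_or_nonempty with rfl | hA
    · simp
    · obtain ⟨j, hj, hjmax⟩ := A.exists_max_image (fun i => (π.symm i : ℕ)) hA
      have hAj : A ∩ chainSet π (π.symm j : ℕ) = A.erase j := by
        ext i
        simp only [Finset.mem_inter, chainSet, Finset.mem_filter, Finset.mem_univ, true_and,
          Finset.mem_erase]
        constructor
        · rintro ⟨hi, hlt⟩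
          exact ⟨by rintro rfl; omega, hi⟩
        · rintro ⟨hne, hi⟩
          refine ⟨hi, ?_⟩
          have h1 := hjmax i hi
          have h2 : (π.symm i : ℕ) ≠ (π.symm j : ℕ) := by
            intro h
            exact hne (π.symm.injective (Fin.ext h))
          omega
      have key : ∀ i ∈ A.erase j, A ∩ chainSet π (π.symm i : ℕ)
          = A.erase j ∩ chainSet π (π.symm i : ℕ) := by
        intro i hi
        have hiA : i ∈ A := (Finset.mem_erase.mp hi).2
        have hj_not : j ∉ chainSet π (π.symm i : ℕ) := by
          simp only [chainSet, Finset.mem_filter, Finset.mem_univ, true_and, not_lt]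
          exact hjmax i hiA
        ext k
        simp only [Finset.mem_inter, Finset.mem_erase]
        constructor
        · rintro ⟨hk, hk2⟩
          exact ⟨⟨by rintro rfl; exact hj_not hk2, hk⟩, hk2⟩
        · rintro ⟨⟨_, hk⟩, hk2⟩; exact ⟨hk, hk2⟩
      rw [← Finset.add_sum_erase _ _ hj, hAj, Finset.insert_erase hj]
      have hsum : ∑ i ∈ A.erase j, (f (insert i (A ∩ chainSet π (π.symm i : ℕ)))
          - f (A ∩ chainSet π (π.symm i : ℕ)))
          = ∑ i ∈ A.erase j, (f (insert i (A.erase j ∩ chainSet π (π.symm i : ℕ)))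
          - f (A.erase j ∩ chainSet π (π.symm i : ℕ))) := by
        apply Finset.sum_congr rfl
        intro i hi
        rw [key i hi]
      rw [hsum, ih (A.erase j) (Finset.erase_ssubset hj)]
      ring

/-- for `f = f̄ - f̲` and any subset `A`, the chain-gradient coordinates
summed over `A` are bounded by `(1/α) f̄(A) - β f̲(A)`. -/
theorem chainGrad_sum_le (n : ℕ) (hn : 1 ≤ n) (α β : ℝ)
    (hα : 0 < α ∧ α ≤ 1) (hβ : 0 < β ∧ β ≤ 1)
    (fbar funder : Finset (Fin n) → ℝ)
    (hbar : normalizedF fbar ∧ nondecreasingF fbar ∧ weaklyDRSub α fbar)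
    (hunder : normalizedF funder ∧ nondecreasingF funder ∧ weaklyDRSuper β funder)
    (x : Fin n → ℝ) (hx : inCube x) (π : Equiv.Perm (Fin n)) (hπ : isSorting x π)
    (A : Finset (Fin n)) :
    ∑ i ∈ A, chainGrad (fun S => fbar S - funder S) π i
      ≤ (1 / α) * fbar A - β * funder A := by
  obtain ⟨hα0, hα1⟩ := hα
  obtain ⟨hβ0, hβ1⟩ := hβ
  obtain ⟨hbn, hbm, hbs⟩ := hbar
  obtain ⟨hun, hum, hus⟩ := hunder
  have hstep : ∀ i ∈ A,
      chainGrad (fun S => fbar S - funder S) π i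
        ≤ (1 / α) * (fbar (insert i (A ∩ chainSet π (π.symm i : ℕ)))
            - fbar (A ∩ chainSet π (π.symm i : ℕ)))
          - β * (funder (insert i (A ∩ chainSet π (π.symm i : ℕ)))
            - funder (A ∩ chainSet π (π.symm i : ℕ))) := by
    intro i hi
    set B := chainSet π (π.symm i : ℕ) with hB
    have hiB : i ∉ B := by simp [hB, chainSet]
    have hsub : A ∩ B ⊆ B := Finset.inter_subset_right
    have h1 : α * marginal fbar i B ≤ marginal fbar i (A ∩ B) := hbs _ _ hsub i hiB
    have h2 : β * marginal funder i (A ∩ B) ≤ marginal funder i B := hus _ _ hsub i hiB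
    have heq : chainGrad (fun S => fbar S - funder S) π i
        = marginal fbar i B - marginal funder i B := by
      simp only [chainGrad, chainSet_succ, marginal, ← hB]
      ring
    rw [heq]
    have hb : marginal fbar i B ≤ (1 / α) * marginal fbar i (A ∩ B) := by
      rw [div_mul_eq_mul_div, le_div_iff₀ hα0]
      nlinarith
    simp only [marginal] at hb h2 ⊢
    linarith
  calc ∑ i ∈ A, chainGrad (fun S => fbar S - funder S) π i
      ≤ ∑ i ∈ A, ((1 / α) * (fbar (insert i (A ∩ chainSet π (π.symm i : ℕ)))
            - fbar (A ∩ chainSet π (π.symm i : ℕ)))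
          - β * (funder (insert i (A ∩ chainSet π (π.symm i : ℕ)))
            - funder (A ∩ chainSet π (π.symm i : ℕ)))) := Finset.sum_le_sum hstep
    _ = (1 / α) * ∑ i ∈ A, (fbar (insert i (A ∩ chainSet π (π.symm i : ℕ)))
            - fbar (A ∩ chainSet π (π.symm i : ℕ)))
          - β * ∑ i ∈ A, (funder (insert i (A ∩ chainSet π (π.symm i : ℕ)))
            - funder (A ∩ chainSet π (π.symm i : ℕ))) := by
        rw [Finset.sum_sub_distrib, Finset.mul_sum, Finset.mul_sum]
    _ = (1 / α) * (fbar A - fbar ∅) - β * (funder A - funder ∅) := by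
        rw [telescope_sum fbar π A, telescope_sum funder π A]
    _ = (1 / α) * fbar A - β * funder A := by rw [hbn, hun]; ring
end

section
/- Let n ≥ 1, α, β ∈ (0,1], and let f = f̄ − f̲ where f̄ : 2^{[n]} → ℝ is normalized, nondecreasing and α-weakly DR-submodular, and f̲ : 2^{[n]} → ℝ is normalized, nondecreasing and β-weakly DR-supermodular. Fix any x ∈ [0,1]^n and let g = g(x;f) be the chain gradient of f at x. Then for every y ∈ [0,1]^n: ⟨g, y⟩ ≤ (1/α)·f̄_L(y) − β·f̲_L(y), where f̄_L and f̲_L are the Lovász extensions of f̄ and f̲. In particular, taking y = x, f_L(x) ≤ (1/α)·f̄_L(x) − β·f̲_L(x). -/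
open Finset

-- auxiliary lemmas

lemma mem_chainSet {n : ℕ} {π : Equiv.Perm (Fin n)} {i : ℕ} {j : Fin n} :
    j ∈ chainSet π i ↔ (π.symm j : ℕ) < i := by
  simp [chainSet]

lemma chainSet_zero {n : ℕ} (π : Equiv.Perm (Fin n)) : chainSet π 0 = ∅ := by
  ext j; simp [mem_chainSet]

lemma chainSet_succ_of_lt {n : ℕ} (π : Equiv.Perm (Fin n)) {k : ℕ} (hk : k < n) :
    chainSet π (k + 1) = insert (π ⟨k, hk⟩) (chainSet π k) := by
  ext j
  simp only [mem_chainSet, Finset.mem_insert, Nat.lt_succ_iff]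
  constructor
  · intro h
    rcases eq_or_lt_of_le h with h | h
    · left
      have : π.symm j = ⟨k, hk⟩ := Fin.ext h
      rw [← this, Equiv.apply_symm_apply]
    · right; exact h
  · rintro (rfl | h)
    · simp
    · omega

lemma not_mem_chainSet_symm {n : ℕ} (π : Equiv.Perm (Fin n)) (j : Fin n) :
    j ∉ chainSet π (π.symm j : ℕ) := by
  simp [mem_chainSet]

lemma chainGrad_eq_marginal {n : ℕ} (f : Finset (Fin n) → ℝ) (π : Equiv.Perm (Fin n)) (j : Fin n) :
    chainGrad f π j = marginal f j (chainSet π (π.symm j : ℕ)) := by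
  unfold chainGrad marginal
  congr 2
  rw [chainSet_succ_of_lt π (π.symm j).isLt]
  congr 1
  rw [Fin.eta, Equiv.apply_symm_apply]

lemma key_sub {n : ℕ} {α : ℝ} (f : Finset (Fin n) → ℝ)
    (hf : weaklyDRSub α f) (π : Equiv.Perm (Fin n)) (B : Finset (Fin n)) :
    α * ∑ j ∈ B, chainGrad f π j ≤ f B - f ∅ := by
  induction B using Finset.strongInduction with
  | _ B ih =>
    rcases B.eq_empty_or_nonempty with rfl | hB
    · simp
    · obtain ⟨j, hjB, hjmax⟩ := B.exists_max_image (fun j => (π.symm j : ℕ)) hB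
      have hsub : B.erase j ⊆ chainSet π (π.symm j : ℕ) := by
        intro a ha
        rw [mem_chainSet]
        have h1 := hjmax a (Finset.mem_of_mem_erase ha)
        have h2 : a ≠ j := Finset.ne_of_mem_erase ha
        rcases eq_or_lt_of_le h1 with h | h
        · exact absurd (π.symm.injective (Fin.ext h)) h2
        · exact h
      have hdr := hf (B.erase j) (chainSet π (π.symm j : ℕ)) hsub j (not_mem_chainSet_symm π j)
      have hins : insert j (B.erase j) = B := Finset.insert_erase hjB
      have hmarg : marginal f j (B.erase j) = f B - f (B.erase j) := by
        unfold marginal; rw [hins]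
      have hsum : ∑ x ∈ B, chainGrad f π x
          = ∑ x ∈ B.erase j, chainGrad f π x + chainGrad f π j :=
        (Finset.sum_erase_add B _ hjB).symm
      have hih := ih (B.erase j) (Finset.erase_ssubset hjB)
      rw [hmarg] at hdr
      rw [hsum, chainGrad_eq_marginal]
      nlinarith [hdr, hih]

lemma key_super {n : ℕ} {β : ℝ} (f : Finset (Fin n) → ℝ)
    (hf : weaklyDRSuper β f) (π : Equiv.Perm (Fin n)) (B : Finset (Fin n)) :
    β * (f B - f ∅) ≤ ∑ j ∈ B, chainGrad f π j := by
  induction B using Finset.strongInduction with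
  | _ B ih =>
    rcases B.eq_empty_or_nonempty with rfl | hB
    · simp
    · obtain ⟨j, hjB, hjmax⟩ := B.exists_max_image (fun j => (π.symm j : ℕ)) hB
      have hsub : B.erase j ⊆ chainSet π (π.symm j : ℕ) := by
        intro a ha
        rw [mem_chainSet]
        have h1 := hjmax a (Finset.mem_of_mem_erase ha)
        have h2 : a ≠ j := Finset.ne_of_mem_erase ha
        rcases eq_or_lt_of_le h1 with h | h
        · exact absurd (π.symm.injective (Fin.ext h)) h2
        · exact h
      have hdr := hf (B.erase j) (chainSet π (π.symm j : ℕ)) hsub j (not_mem_chainSet_symm π j)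
      have hins : insert j (B.erase j) = B := Finset.insert_erase hjB
      have hmarg : marginal f j (B.erase j) = f B - f (B.erase j) := by
        unfold marginal; rw [hins]
      have hsum : ∑ x ∈ B, chainGrad f π x
          = ∑ x ∈ B.erase j, chainGrad f π x + chainGrad f π j :=
        (Finset.sum_erase_add B _ hjB).symm
      have hih := ih (B.erase j) (Finset.erase_ssubset hjB)
      rw [hmarg] at hdr
      rw [hsum, chainGrad_eq_marginal]
      nlinarith [hdr, hih]

lemma tele_sum {n : ℕ} (y : Fin n → ℝ) (σ : Equiv.Perm (Fin n)) {a b : ℕ} (hab : a ≤ b) :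
    ∑ i ∈ Finset.Ico a b, chainWeight y σ i = extCoord y σ a - extCoord y σ b := by
  induction b, hab using Nat.le_induction with
  | base => simp
  | succ b hab ih =>
    rw [Finset.sum_Ico_succ_top hab, ih]
    unfold chainWeight
    ring

lemma extCoord_top {n : ℕ} (y : Fin n → ℝ) (σ : Equiv.Perm (Fin n)) :
    extCoord y σ (n + 1) = 0 := by
  unfold extCoord
  rw [dif_neg (by omega), if_neg (by omega)]

lemma extCoord_symm {n : ℕ} (y : Fin n → ℝ) (σ : Equiv.Perm (Fin n)) (j : Fin n) :
    extCoord y σ ((σ.symm j : ℕ) + 1) = y j := by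
  unfold extCoord
  rw [dif_pos ⟨by omega, by omega⟩]
  have h2 : (⟨(σ.symm j : ℕ) + 1 - 1, by omega⟩ : Fin n) = σ.symm j := by
    ext; simp
  rw [h2, Equiv.apply_symm_apply]

lemma inner_eq {n : ℕ} (y : Fin n → ℝ) (σ : Equiv.Perm (Fin n)) (g : Fin n → ℝ) :
    ∑ j : Fin n, g j * y j
      = ∑ i ∈ Finset.range (n + 1), chainWeight y σ i * ∑ j ∈ chainSet σ i, g j := by
  have h1 : ∀ i ∈ Finset.range (n + 1), chainWeight y σ i * ∑ j ∈ chainSet σ i, g j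
      = ∑ j : Fin n, if j ∈ chainSet σ i then chainWeight y σ i * g j else 0 := by
    intro i _
    rw [Finset.sum_ite_mem, Finset.univ_inter, Finset.mul_sum]
  rw [Finset.sum_congr rfl h1, Finset.sum_comm]
  apply Finset.sum_congr rfl
  intro j _
  have hfil : (Finset.range (n + 1)).filter (fun i => j ∈ chainSet σ i)
      = Finset.Ico ((σ.symm j : ℕ) + 1) (n + 1) := by
    ext i
    simp only [Finset.mem_filter, Finset.mem_range, Finset.mem_Ico, mem_chainSet]
    omega
  rw [← Finset.sum_filter, hfil, ← Finset.sum_mul, tele_sum y σ (by omega),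
    extCoord_top, extCoord_symm]
  ring

lemma chainWeight_nonneg {n : ℕ} {y : Fin n → ℝ} {σ : Equiv.Perm (Fin n)}
    (hy : inCube y) (hσ : isSorting y σ) (i : ℕ) : 0 ≤ chainWeight y σ i := by
  unfold chainWeight extCoord
  rcases Nat.lt_or_ge i 1 with hi | hi
  · have hi0 : i = 0 := by omega
    subst hi0
    have hA : ¬(1 ≤ 0 ∧ 0 ≤ n) := by omega
    rcases Nat.lt_or_ge 0 n with hn | hn
    · have hB : 1 ≤ 0 + 1 ∧ 0 + 1 ≤ n := ⟨le_refl 1, by omega⟩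
      rw [dif_neg hA, if_pos rfl, dif_pos hB]
      linarith [(hy (σ ⟨0 + 1 - 1, by omega⟩)).2]
    · have hB : ¬(1 ≤ 0 + 1 ∧ 0 + 1 ≤ n) := by omega
      rw [dif_neg hA, if_pos rfl, dif_neg hB, if_neg (by omega)]
      norm_num
  · rcases Nat.lt_or_ge i n with hn | hn
    · have hA : 1 ≤ i ∧ i ≤ n := ⟨hi, by omega⟩
      have hB : 1 ≤ i + 1 ∧ i + 1 ≤ n := ⟨by omega, by omega⟩
      rw [dif_pos hA, dif_pos hB]
      have := hσ ⟨i - 1, by omega⟩ ⟨i + 1 - 1, by omega⟩ (Fin.mk_le_mk.mpr (by omega))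
      linarith
    · rcases Nat.lt_or_ge n i with hn2 | hn2
      · have hA : ¬(1 ≤ i ∧ i ≤ n) := by omega
        have hB : ¬(1 ≤ i + 1 ∧ i + 1 ≤ n) := by omega
        rw [dif_neg hA, if_neg (by omega), dif_neg hB, if_neg (by omega)]
        norm_num
      · have hin : i = n := by omega
        have hA : 1 ≤ i ∧ i ≤ n := ⟨hi, hn2⟩
        have hB : ¬(1 ≤ i + 1 ∧ i + 1 ≤ n) := by omega
        rw [dif_pos hA, dif_neg hB, if_neg (by omega)]
        linarith [(hy (σ ⟨i - 1, by omega⟩)).1]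

lemma sum_chainGrad_chainSet {n : ℕ} (f : Finset (Fin n) → ℝ) (π : Equiv.Perm (Fin n)) :
    ∀ i ≤ n, ∑ j ∈ chainSet π i, chainGrad f π j = f (chainSet π i) - f ∅ := by
  intro i
  induction i with
  | zero => intro _; simp [chainSet_zero]
  | succ k ih =>
    intro hk
    have hklt : k < n := by omega
    have hnot : π ⟨k, hklt⟩ ∉ chainSet π k := by
      simp [mem_chainSet]
    have hg : chainGrad f π (π ⟨k, hklt⟩) = f (chainSet π (k + 1)) - f (chainSet π k) := by
      unfold chainGrad
      rw [Equiv.symm_apply_apply]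
    calc ∑ j ∈ chainSet π (k + 1), chainGrad f π j
        = chainGrad f π (π ⟨k, hklt⟩) + ∑ j ∈ chainSet π k, chainGrad f π j := by
          rw [chainSet_succ_of_lt π hklt, Finset.sum_insert hnot]
      _ = f (chainSet π (k + 1)) - f ∅ := by rw [hg, ih (by omega)]; ring

/-- for `f = f̄ - f̲` and any `y ∈ [0,1]^n`,
`⟨g(x;f), y⟩ ≤ (1/α) f̄_L(y) - β f̲_L(y)`; in particular, taking `y = x`,
`f_L(x) ≤ (1/α) f̄_L(x) - β f̲_L(x)`. -/
theorem inner_chainGrad_le_lovasz_combination (n : ℕ) (hn : 1 ≤ n) (α β : ℝ)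
    (hα : 0 < α ∧ α ≤ 1) (hβ : 0 < β ∧ β ≤ 1)
    (fbar funder : Finset (Fin n) → ℝ)
    (hbar : normalizedF fbar ∧ nondecreasingF fbar ∧ weaklyDRSub α fbar)
    (hunder : normalizedF funder ∧ nondecreasingF funder ∧ weaklyDRSuper β funder)
    (x : Fin n → ℝ) (hx : inCube x) (π : Equiv.Perm (Fin n)) (hπ : isSorting x π) :
    (∀ y : Fin n → ℝ, inCube y → ∀ σ : Equiv.Perm (Fin n), isSorting y σ →
        ∑ j : Fin n, chainGrad (fun S => fbar S - funder S) π j * y j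
          ≤ (1 / α) * lovasz fbar y σ - β * lovasz funder y σ) ∧
    lovasz (fun S => fbar S - funder S) x π
      ≤ (1 / α) * lovasz fbar x π - β * lovasz funder x π := by
  obtain ⟨hα1, hα2⟩ := hα
  obtain ⟨hβ1, hβ2⟩ := hβ
  obtain ⟨hbar0, hbarmono, hbarsub⟩ := hbar
  obtain ⟨hund0, hundmono, hundsuper⟩ := hunder
  have hbar0' : fbar ∅ = 0 := hbar0
  have hund0' : funder ∅ = 0 := hund0
  set f : Finset (Fin n) → ℝ := fun S => fbar S - funder S with hfdef
  have H : ∀ y : Fin n → ℝ, inCube y → ∀ σ : Equiv.Perm (Fin n), isSorting y σ →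
      ∑ j : Fin n, chainGrad f π j * y j
        ≤ (1 / α) * lovasz fbar y σ - β * lovasz funder y σ := by
    intro y hy σ hσ
    rw [inner_eq y σ (chainGrad f π)]
    have hRHS : (1 / α) * lovasz fbar y σ - β * lovasz funder y σ
        = ∑ i ∈ Finset.range (n + 1), chainWeight y σ i *
            ((1 / α) * fbar (chainSet σ i) - β * funder (chainSet σ i)) := by
      unfold lovasz
      rw [Finset.mul_sum, Finset.mul_sum, ← Finset.sum_sub_distrib]
      apply Finset.sum_congr rfl; intro i _; ring
    rw [hRHS]
    apply Finset.sum_le_sum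
    intro i _
    apply mul_le_mul_of_nonneg_left _ (chainWeight_nonneg hy hσ i)
    have h1 := key_sub fbar hbarsub π (chainSet σ i)
    have h2 := key_super funder hundsuper π (chainSet σ i)
    rw [hbar0'] at h1
    rw [hund0'] at h2
    have hsplit : ∑ j ∈ chainSet σ i, chainGrad f π j
        = ∑ j ∈ chainSet σ i, chainGrad fbar π j
          - ∑ j ∈ chainSet σ i, chainGrad funder π j := by
      rw [← Finset.sum_sub_distrib]
      apply Finset.sum_congr rfl
      intro j _
      simp only [chainGrad, hfdef]
      ring
    rw [hsplit]
    have hS1 : ∑ j ∈ chainSet σ i, chainGrad fbar π j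
        ≤ (1 / α) * fbar (chainSet σ i) := by
      have hxeq : α * ((1 / α) * fbar (chainSet σ i)) = fbar (chainSet σ i) := by
        field_simp
      refine le_of_mul_le_mul_left ?_ hα1
      rw [hxeq]; linarith
    linarith
  refine ⟨H, ?_⟩
  have hfx : lovasz f x π = ∑ j : Fin n, chainGrad f π j * x j := by
    rw [inner_eq x π (chainGrad f π)]
    unfold lovasz
    apply Finset.sum_congr rfl
    intro i hi
    rw [sum_chainGrad_chainSet f π i (Nat.lt_succ_iff.mp (Finset.mem_range.mp hi))]
    have hf0 : f ∅ = 0 := by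
      show fbar ∅ - funder ∅ = 0
      rw [hbar0', hund0']; ring
    rw [hf0]; ring
  rw [hfx]
  exact H x hx π hπ
end

section
/- Let n ≥ 1, μ ∈ (0,1], L > 0, x ∈ [0,1]^n, and let f : 2^{[n]} → ℝ be a set function with |f(S)| ≤ L for all S ⊆ [n]. Then the one-point gradient estimator ĝ built from x, f and exploration probability μ satisfies the second-moment bound E[‖ĝ‖_2^2] ≤ 2 L^2 (n+1)^2 / μ. -/
open Finset

/-- The sampling probability `p_i = (1-μ) λ_i + μ/(n+1)` of the exploration mixture. -/
noncomputable def probIdx {n : ℕ} (x : Fin n → ℝ) (π : Equiv.Perm (Fin n)) (μ : ℝ) (i : ℕ) : ℝ :=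
  (1 - μ) * chainWeight x π i + μ / ((n : ℝ) + 1)

/-- `f̂_i = 1{I = i} · f(A_I) / p_i`, as a function of the sampled index `I`. -/
noncomputable def fhat {n : ℕ} (x : Fin n → ℝ) (π : Equiv.Perm (Fin n)) (μ : ℝ)
    (f : Finset (Fin n) → ℝ) (I i : ℕ) : ℝ :=
  if I = i then f (chainSet π I) / probIdx x π μ i else 0

/-- The one-point gradient estimator `ĝ`, with `ĝ_{π(i)} = f̂_i - f̂_{i-1}`, as a
function of the sampled index `I`. -/
noncomputable def ghat {n : ℕ} (x : Fin n → ℝ) (π : Equiv.Perm (Fin n)) (μ : ℝ)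
    (f : Finset (Fin n) → ℝ) (I : ℕ) : Fin n → ℝ :=
  fun j => fhat x π μ f I ((π.symm j : ℕ) + 1) - fhat x π μ f I (π.symm j : ℕ)

lemma sum_ite_le {α : Type*} [Fintype α] [DecidableEq α] (e : α → ℕ)
    (he : Function.Injective e) (k : ℕ) (c : ℝ) (hc : 0 ≤ c) :
    ∑ a : α, (if k = e a then c else 0) ≤ c := by
  classical
  rw [Finset.sum_ite, Finset.sum_const, Finset.sum_const_zero, add_zero, nsmul_eq_mul]
  have hcard : (Finset.univ.filter fun a => k = e a).card ≤ 1 := by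
    apply Finset.card_le_one.mpr
    intro a ha b hb
    simp only [Finset.mem_filter] at ha hb
    exact he (ha.2.symm.trans hb.2)
  calc ((Finset.univ.filter fun a => k = e a).card : ℝ) * c ≤ 1 * c := by
        apply mul_le_mul_of_nonneg_right _ hc
        exact_mod_cast hcard
    _ = c := one_mul c

lemma chainWeight_nonneg_s11 {n : ℕ} (hn : 1 ≤ n) {x : Fin n → ℝ} (hx : inCube x)
    {π : Equiv.Perm (Fin n)} (hπ : isSorting x π) (i : ℕ) : 0 ≤ chainWeight x π i := by
  unfold chainWeight extCoord
  rcases Nat.eq_zero_or_pos i with h0 | hpos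
  · subst h0
    rw [dif_neg (by omega), if_pos rfl, dif_pos ⟨le_refl 1, hn⟩]
    have := (hx (π ⟨0, by omega⟩)).2
    linarith
  · by_cases h1 : i ≤ n
    · by_cases h2 : i + 1 ≤ n
      · rw [dif_pos ⟨hpos, h1⟩, dif_pos ⟨by omega, h2⟩]
        have : (⟨i - 1, by omega⟩ : Fin n) ≤ ⟨i + 1 - 1, by omega⟩ := by
          simp only [Fin.mk_le_mk]; omega
        linarith [hπ _ _ this]
      · rw [dif_pos ⟨hpos, h1⟩, dif_neg (by omega), if_neg (by omega)]
        have := (hx (π ⟨i - 1, by omega⟩)).1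
        linarith
    · rw [dif_neg (by omega), if_neg (by omega), dif_neg (by omega), if_neg (by omega)]
      norm_num

/-- second-moment bound for the one-point gradient estimator:
`E[‖ĝ‖₂²] ≤ 2 L² (n+1)² / μ`. -/
theorem ghat_second_moment (n : ℕ) (hn : 1 ≤ n) (μ L : ℝ) (hμ : 0 < μ ∧ μ ≤ 1)
    (hL : 0 < L) (x : Fin n → ℝ) (hx : inCube x)
    (π : Equiv.Perm (Fin n)) (hπ : isSorting x π)
    (f : Finset (Fin n) → ℝ) (hf : ∀ S : Finset (Fin n), |f S| ≤ L) :
    ∑ I ∈ Finset.range (n + 1), probIdx x π μ I * (∑ j : Fin n, (ghat x π μ f I j) ^ 2)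
      ≤ 2 * L ^ 2 * ((n : ℝ) + 1) ^ 2 / μ := by
  obtain ⟨hμ0, hμ1⟩ := hμ
  have hnp : (0:ℝ) < (n:ℝ) + 1 := by positivity
  have hpge : ∀ I, μ / ((n:ℝ)+1) ≤ probIdx x π μ I := by
    intro I
    have h1 : 0 ≤ (1 - μ) * chainWeight x π I :=
      mul_nonneg (by linarith) (chainWeight_nonneg_s11 hn hx hπ I)
    unfold probIdx; linarith
  have hppos : ∀ I, 0 < probIdx x π μ I :=
    fun I => lt_of_lt_of_le (by positivity) (hpge I)
  have key : ∀ I ∈ Finset.range (n+1),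
      probIdx x π μ I * (∑ j : Fin n, (ghat x π μ f I j) ^ 2)
        ≤ 2 * L ^ 2 * ((n:ℝ)+1) / μ := by
    intro I _
    set p := probIdx x π μ I with hp
    have hp0 : 0 < p := hppos I
    have hLp : (0:ℝ) ≤ (L / p)^2 := by positivity
    have hbound : ∀ j : Fin n, (ghat x π μ f I j) ^ 2 ≤
        (if I = (π.symm j : ℕ) + 1 then (L/p)^2 else 0)
        + (if I = (π.symm j : ℕ) then (L/p)^2 else 0) := by
      intro j
      have hfsq : (f (chainSet π I) / p)^2 ≤ (L/p)^2 := by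
        rw [div_pow, div_pow]
        apply div_le_div_of_nonneg_right _ (by positivity)
        calc f (chainSet π I) ^ 2 = |f (chainSet π I)| ^ 2 := (sq_abs _).symm
          _ ≤ L ^ 2 := pow_le_pow_left₀ (abs_nonneg _) (hf _) 2
      unfold ghat fhat
      by_cases h1 : I = (π.symm j : ℕ) + 1
      · have h2 : ¬ I = (π.symm j : ℕ) := by omega
        simp only [if_pos h1, if_neg h2, sub_zero, add_zero]
        rw [← h1]
        exact hfsq
      · by_cases h2 : I = (π.symm j : ℕ)
        · simp only [if_neg h1, if_pos h2, zero_sub, zero_add, neg_sq]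
          rw [← h2]
          exact hfsq
        · simp only [if_neg h1, if_neg h2, sub_zero, add_zero]
          norm_num
    have hsum : (∑ j : Fin n, (ghat x π μ f I j) ^ 2) ≤ 2 * (L/p)^2 := by
      calc (∑ j : Fin n, (ghat x π μ f I j) ^ 2)
          ≤ ∑ j : Fin n, ((if I = (π.symm j : ℕ) + 1 then (L/p)^2 else 0)
              + (if I = (π.symm j : ℕ) then (L/p)^2 else 0)) :=
            Finset.sum_le_sum (fun j _ => hbound j)
        _ = (∑ j : Fin n, (if I = (π.symm j : ℕ) + 1 then (L/p)^2 else 0))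
              + (∑ j : Fin n, (if I = (π.symm j : ℕ) then (L/p)^2 else 0)) :=
            Finset.sum_add_distrib
        _ ≤ (L/p)^2 + (L/p)^2 := by
            apply add_le_add
            · refine sum_ite_le (fun j => (π.symm j : ℕ) + 1) ?_ I _ hLp
              intro a b h
              have : ((π.symm a : ℕ)) = ((π.symm b : ℕ)) := by simpa using h
              exact π.symm.injective (Fin.val_injective this)
            · exact sum_ite_le (fun j => (π.symm j : ℕ))
                (fun a b h => π.symm.injective (Fin.val_injective h)) I _ hLp
        _ = 2 * (L/p)^2 := by ring
    calc p * (∑ j : Fin n, (ghat x π μ f I j) ^ 2) ≤ p * (2 * (L/p)^2) :=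
          mul_le_mul_of_nonneg_left hsum hp0.le
      _ = 2 * L^2 / p := by field_simp
      _ ≤ 2 * L^2 / (μ / ((n:ℝ)+1)) := by
          apply div_le_div_of_nonneg_left (by positivity) (by positivity) (hpge I)
      _ = 2 * L^2 * ((n:ℝ)+1) / μ := by
          rw [div_div_eq_mul_div]
  calc ∑ I ∈ Finset.range (n + 1), probIdx x π μ I * (∑ j : Fin n, (ghat x π μ f I j) ^ 2)
      ≤ ∑ I ∈ Finset.range (n + 1), 2 * L^2 * ((n:ℝ)+1) / μ := Finset.sum_le_sum key
    _ = ((n:ℝ) + 1) * (2 * L^2 * ((n:ℝ)+1) / μ) := by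
        rw [Finset.sum_const, Finset.card_range, nsmul_eq_mul]; push_cast; ring
    _ = 2 * L ^ 2 * ((n : ℝ) + 1) ^ 2 / μ := by field_simp
end

section
/- (Deterministic regret of delayed projected gradient descent using all available gradients.) Let n, T ≥ 1, η > 0, G > 0. Let g_1, …, g_T ∈ ℝ^n with ‖g_t‖_2 ≤ G for all t, and let d_1, …, d_T be integers with d_t ≥ 1 and t + d_t − 1 ≤ T for all t; for each t let F_t = {k ∈ [T] : k + d_k − 1 = t} be the set of indices whose feedback arrives in round t. Let x_1 ∈ [0,1]^n and define x_{t+1} = Π_{[0,1]^n}(x_t − η ∑_{k ∈ F_t} g_k), where Π_{[0,1]^n} is the Euclidean projection onto [0,1]^n (coordinatewise clipping to [0,1]). Then for every x ∈ [0,1]^n: ∑_{t=1}^{T} ⟨g_t, x_t − x⟩ ≤ ‖x_1 − x‖_2^2/(2η) + (η G^2/2)·T + η G^2 ∑_{t=1}^{T} d_t. -/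
open Finset


lemma min_sq (a b : ℝ) : (min 1 a - min 1 b)^2 ≤ (a - b)^2 := by
  rcases le_total a 1 with h1 | h1 <;> rcases le_total b 1 with h2 | h2 <;>
    simp [min_eq_left, min_eq_right, h1, h2] <;> nlinarith

lemma max_sq (a b : ℝ) : (max 0 a - max 0 b)^2 ≤ (a - b)^2 := by
  rcases le_total a 0 with h1 | h1 <;> rcases le_total b 0 with h2 | h2 <;>
    simp [max_eq_left, max_eq_right, h1, h2] <;> nlinarith

lemma clip_sq (a b : ℝ) : (max 0 (min 1 a) - max 0 (min 1 b))^2 ≤ (a - b)^2 :=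
  le_trans (max_sq _ _) (min_sq a b)

lemma clip_fix (b : ℝ) (h0 : 0 ≤ b) (h1 : b ≤ 1) : max 0 (min 1 b) = b := by
  rw [min_eq_right h1, max_eq_right h0]

lemma clip_sq' (a b : ℝ) (h0 : 0 ≤ b) (h1 : b ≤ 1) : (max 0 (min 1 a) - b)^2 ≤ (a - b)^2 := by
  have := clip_sq a b
  rwa [clip_fix b h0 h1] at this

noncomputable def Nrm {n : ℕ} (v : Fin n → ℝ) : ℝ := Real.sqrt (∑ j, v j ^ 2)

lemma Nrm_eq {n : ℕ} (v : Fin n → ℝ) : Nrm v = ‖(WithLp.linearEquiv 2 ℝ (Fin n → ℝ)).symm v‖ := by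
  rw [EuclideanSpace.norm_eq, Nrm]
  simp [WithLp.linearEquiv, sq_abs]

lemma Nrm_nonneg {n : ℕ} (v : Fin n → ℝ) : 0 ≤ Nrm v := Real.sqrt_nonneg _

lemma Nrm_sq {n : ℕ} (v : Fin n → ℝ) : Nrm v ^ 2 = ∑ j, v j ^ 2 :=
  Real.sq_sqrt (by positivity)

lemma Nrm_sum_le {n : ℕ} (s : Finset ℕ) (v : ℕ → Fin n → ℝ) :
    Nrm (∑ k ∈ s, v k) ≤ ∑ k ∈ s, Nrm (v k) := by
  simp only [Nrm_eq]
  rw [map_sum (WithLp.linearEquiv 2 ℝ (Fin n → ℝ)).symm v s]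
  exact norm_sum_le _ _

lemma Nrm_triangle {n : ℕ} (u v : Fin n → ℝ) : Nrm (u - v) ≤ Nrm u + Nrm v := by
  simp only [Nrm_eq]; rw [map_sub]; exact norm_sub_le _ _

lemma Nrm_CS {n : ℕ} (u v : Fin n → ℝ) : ∑ j, u j * v j ≤ Nrm u * Nrm v :=
  Real.sum_mul_le_sqrt_mul_sqrt _ _ _

lemma comb (T : ℕ) (r : ℕ → ℕ) (hr : ∀ k < T, k ≤ r k ∧ r k < T) :
    (1/2 : ℝ) * (∑ t ∈ range T, ((((range T).filter (fun k => r k = t)).card : ℝ))^2)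
      + ∑ k ∈ range T, ∑ s ∈ Ico k (r k), (((range T).filter (fun b => r b = s)).card : ℝ)
      ≤ (T : ℝ)/2 + ∑ k ∈ range T, ((r k - k : ℕ) : ℝ) := by
  have hc : ∀ s : ℕ, ((((range T).filter (fun k => r k = s)).card : ℝ))
      = ∑ b ∈ range T, if r b = s then (1:ℝ) else 0 := by
    intro s; rw [Finset.sum_boole]
  -- Step A
  have hA : (∑ t ∈ range T, ((((range T).filter (fun k => r k = t)).card : ℝ))^2)
      = ∑ k ∈ range T, ∑ b ∈ range T, (if r k = r b then (1:ℝ) else 0) := by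
    have h1 : ∀ t ∈ range T, ((((range T).filter (fun k => r k = t)).card : ℝ))^2
        = ∑ k ∈ range T, ∑ b ∈ range T,
            ((if r k = t then (1:ℝ) else 0) * (if r b = t then (1:ℝ) else 0)) := by
      intro t _
      rw [hc, sq, Finset.sum_mul_sum]
    rw [Finset.sum_congr rfl h1, Finset.sum_comm]
    refine Finset.sum_congr rfl fun k hk => ?_
    rw [Finset.sum_comm]
    refine Finset.sum_congr rfl fun b hb => ?_
    rw [Finset.sum_eq_single (r k)]
    · simp [eq_comm]
    · intro t _ ht; simp [Ne.symm ht]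
    · intro hmem; exact absurd (Finset.mem_range.2 (hr k (Finset.mem_range.1 hk)).2) hmem
  -- Step B
  have hB : (∑ k ∈ range T, ∑ s ∈ Ico k (r k), (((range T).filter (fun b => r b = s)).card : ℝ))
      = ∑ k ∈ range T, ∑ b ∈ range T, (if k ≤ r b ∧ r b < r k then (1:ℝ) else 0) := by
    refine Finset.sum_congr rfl fun k _ => ?_
    rw [Finset.sum_congr rfl (fun s _ => hc s), Finset.sum_comm]
    refine Finset.sum_congr rfl fun b _ => ?_
    rw [Finset.sum_ite_eq (Ico k (r k)) (r b) (fun _ => (1:ℝ))]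
    simp [Finset.mem_Ico]
  -- pointwise bound
  have hpt : ∀ k ∈ range T, ∀ b ∈ range T,
      ((1/2 : ℝ) * (if r k = r b then (1:ℝ) else 0) + (if k ≤ r b ∧ r b < r k then (1:ℝ) else 0))
      + ((1/2 : ℝ) * (if r b = r k then (1:ℝ) else 0) + (if b ≤ r k ∧ r k < r b then (1:ℝ) else 0))
      ≤ (if k < b ∧ b ≤ r k then (1:ℝ) else 0) + (if b < k ∧ k ≤ r b then (1:ℝ) else 0)
        + (if k = b then (1:ℝ) else 0) := by
    intro k hk b hb
    have h1 := hr k (Finset.mem_range.1 hk)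
    have h2 := hr b (Finset.mem_range.1 hb)
    split_ifs <;> norm_num <;> omega
  -- sums of RHS pieces
  have hE1 : ∀ (p : ℕ → ℕ → Prop) [DecidablePred fun pr : ℕ × ℕ => p pr.1 pr.2],
      True := fun _ _ => trivial
  have hH : (∑ k ∈ range T, ∑ b ∈ range T, (if k < b ∧ b ≤ r k then (1:ℝ) else 0))
      ≤ ∑ k ∈ range T, ((r k - k : ℕ) : ℝ) := by
    refine Finset.sum_le_sum fun k hk => ?_
    rw [Finset.sum_boole]
    have hsub : (range T).filter (fun b => k < b ∧ b ≤ r k) ⊆ Ioc k (r k) := by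
      intro b hb
      rw [Finset.mem_filter] at hb
      exact Finset.mem_Ioc.2 hb.2
    calc (((range T).filter (fun b => k < b ∧ b ≤ r k)).card : ℝ)
        ≤ ((Ioc k (r k)).card : ℝ) := by exact_mod_cast Finset.card_le_card hsub
      _ = ((r k - k : ℕ) : ℝ) := by rw [Nat.card_Ioc]
  have hH' : (∑ k ∈ range T, ∑ b ∈ range T, (if b < k ∧ k ≤ r b then (1:ℝ) else 0))
      ≤ ∑ k ∈ range T, ((r k - k : ℕ) : ℝ) := by
    rw [Finset.sum_comm]
    exact hH
  have hDiag : (∑ k ∈ range T, ∑ b ∈ range T, (if k = b then (1:ℝ) else 0)) = T := by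
    have : ∀ k ∈ range T, (∑ b ∈ range T, (if k = b then (1:ℝ) else 0)) = 1 := by
      intro k hk
      rw [Finset.sum_ite_eq (range T) k (fun _ => (1:ℝ)), if_pos hk]
    rw [Finset.sum_congr rfl this]
    simp
  -- symmetry
  set Φ : ℕ → ℕ → ℝ := fun k b =>
    (1/2 : ℝ) * (if r k = r b then (1:ℝ) else 0) + (if k ≤ r b ∧ r b < r k then (1:ℝ) else 0) with hΦ
  have hsym : (∑ k ∈ range T, ∑ b ∈ range T, Φ k b) = ∑ k ∈ range T, ∑ b ∈ range T, Φ b k :=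
    Finset.sum_comm
  have h2L : 2 * (∑ k ∈ range T, ∑ b ∈ range T, Φ k b)
      = ∑ k ∈ range T, ∑ b ∈ range T, (Φ k b + Φ b k) := by
    rw [two_mul]
    nth_rewrite 2 [hsym]
    rw [← Finset.sum_add_distrib]
    exact Finset.sum_congr rfl fun k _ => (Finset.sum_add_distrib).symm
  have hmain : 2 * (∑ k ∈ range T, ∑ b ∈ range T, Φ k b)
      ≤ 2 * (∑ k ∈ range T, ((r k - k : ℕ) : ℝ)) + T := by
    rw [h2L]
    calc ∑ k ∈ range T, ∑ b ∈ range T, (Φ k b + Φ b k)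
        ≤ ∑ k ∈ range T, ∑ b ∈ range T,
            ((if k < b ∧ b ≤ r k then (1:ℝ) else 0) + (if b < k ∧ k ≤ r b then (1:ℝ) else 0)
              + (if k = b then (1:ℝ) else 0)) := by
          refine Finset.sum_le_sum fun k hk => Finset.sum_le_sum fun b hb => hpt k hk b hb
      _ = (∑ k ∈ range T, ∑ b ∈ range T, (if k < b ∧ b ≤ r k then (1:ℝ) else 0))
          + (∑ k ∈ range T, ∑ b ∈ range T, (if b < k ∧ k ≤ r b then (1:ℝ) else 0))
          + (∑ k ∈ range T, ∑ b ∈ range T, (if k = b then (1:ℝ) else 0)) := by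
          simp [Finset.sum_add_distrib]
      _ ≤ (∑ k ∈ range T, ((r k - k : ℕ) : ℝ)) + (∑ k ∈ range T, ((r k - k : ℕ) : ℝ)) + T := by
          rw [hDiag]; exact add_le_add (add_le_add hH hH') le_rfl
      _ = 2 * (∑ k ∈ range T, ((r k - k : ℕ) : ℝ)) + T := by ring
  have hexpand : (1/2 : ℝ) * (∑ t ∈ range T, ((((range T).filter (fun k => r k = t)).card : ℝ))^2)
      + ∑ k ∈ range T, ∑ s ∈ Ico k (r k), (((range T).filter (fun b => r b = s)).card : ℝ)
      = ∑ k ∈ range T, ∑ b ∈ range T, Φ k b := by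
    rw [hA, hB, hΦ]
    rw [Finset.mul_sum]
    rw [← Finset.sum_add_distrib]
    refine Finset.sum_congr rfl fun k _ => ?_
    rw [Finset.mul_sum, ← Finset.sum_add_distrib]
  rw [hexpand]
  linarith [hmain]

/-- Euclidean projection onto `[0,1]^n`, i.e. coordinatewise clipping to `[0,1]`. -/
def clip {n : ℕ} (x : Fin n → ℝ) : Fin n → ℝ := fun j => max 0 (min 1 (x j))

/-- deterministic regret bound for delayed projected gradient descent
that uses all gradients arriving in each round. Rounds are indexed `t = 0, …, T-1`
(a 0-indexed version of `t = 1, …, T`); the feedback of round `k` arrives in round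
`k + d_k - 1`, and `F_t = {k : k + d_k - 1 = t}`. -/
theorem delayed_ogd_regret (n T : ℕ) (hn : 1 ≤ n) (hT : 1 ≤ T) (η G : ℝ)
    (hη : 0 < η) (hG : 0 < G)
    (g : ℕ → Fin n → ℝ) (hg : ∀ t < T, Real.sqrt (∑ j : Fin n, (g t j) ^ 2) ≤ G)
    (d : ℕ → ℕ) (hd : ∀ t < T, 1 ≤ d t ∧ t + d t ≤ T)
    (x : ℕ → Fin n → ℝ) (hx0 : ∀ j, 0 ≤ x 0 j ∧ x 0 j ≤ 1)
    (hrec : ∀ t < T, x (t + 1) =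
      clip (fun j => x t j -
        η * ∑ k ∈ (Finset.range T).filter (fun k => k + d k - 1 = t), g k j))
    (y : Fin n → ℝ) (hy : ∀ j, 0 ≤ y j ∧ y j ≤ 1) :
    ∑ t ∈ Finset.range T, ∑ j : Fin n, g t j * (x t j - y j)
      ≤ (∑ j : Fin n, (x 0 j - y j) ^ 2) / (2 * η)
        + (η * G ^ 2 / 2) * T + η * G ^ 2 * ∑ t ∈ Finset.range T, (d t : ℝ) := by
  set h : ℕ → Fin n → ℝ :=
    fun t j => ∑ k ∈ (Finset.range T).filter (fun k => k + d k - 1 = t), g k j with hh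
  set c : ℕ → ℝ :=
    fun t => ((((Finset.range T).filter (fun k => k + d k - 1 = t)).card : ℝ)) with hc
  have hrk : ∀ k < T, k ≤ k + d k - 1 ∧ k + d k - 1 < T := by
    intro k hk; have := hd k hk; omega
  have hrec' : ∀ t < T, ∀ j, x (t+1) j = max 0 (min 1 (x t j - η * h t j)) := by
    intro t ht j; rw [hrec t ht]; rfl
  have hbox : ∀ t, t ≤ T → ∀ j, 0 ≤ x t j ∧ x t j ≤ 1 := by
    intro t
    induction t with
    | zero => intro _; exact hx0
    | succ m ih =>
      intro hm j
      rw [hrec' m (by omega) j]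
      exact ⟨le_max_left _ _, max_le (by norm_num) (min_le_left _ _)⟩
  have hNg : ∀ k < T, Nrm (g k) ≤ G := fun k hk => hg k hk
  have hNh : ∀ t, Nrm (h t) ≤ G * c t := by
    intro t
    have h1 : h t = ∑ k ∈ ((Finset.range T).filter (fun k => k + d k - 1 = t)), g k := by
      funext j; rw [hh]; simp [Finset.sum_apply]
    rw [h1]
    calc Nrm (∑ k ∈ ((Finset.range T).filter (fun k => k + d k - 1 = t)), g k)
        ≤ ∑ k ∈ ((Finset.range T).filter (fun k => k + d k - 1 = t)), Nrm (g k) :=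
          Nrm_sum_le _ _
      _ ≤ ∑ k ∈ ((Finset.range T).filter (fun k => k + d k - 1 = t)), G :=
          Finset.sum_le_sum fun k hk => hNg k (Finset.mem_range.1 (Finset.mem_filter.1 hk).1)
      _ = G * c t := by rw [Finset.sum_const, nsmul_eq_mul, hc]; ring
  have hcnn : ∀ t, 0 ≤ c t := by intro t; rw [hc]; positivity
  -- descent inequality
  have hdesc : ∀ t < T, 2*η*(∑ j, h t j * (x t j - y j))
      ≤ (∑ j, (x t j - y j)^2) - (∑ j, (x (t+1) j - y j)^2) + η^2 * Nrm (h t)^2 := by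
    intro t ht
    have h2 : (∑ j, (x (t+1) j - y j)^2) ≤ ∑ j, ((x t j - η * h t j) - y j)^2 :=
      Finset.sum_le_sum fun j _ => by
        rw [hrec' t ht j]; exact clip_sq' _ _ (hy j).1 (hy j).2
    have h3 : (∑ j : Fin n, ((x t j - η * h t j) - y j)^2)
        = (∑ j, (x t j - y j)^2) - 2*η*(∑ j, h t j * (x t j - y j))
          + η^2 * (∑ j, h t j ^2) := by
      rw [Finset.mul_sum, Finset.mul_sum, ← Finset.sum_sub_distrib, ← Finset.sum_add_distrib]
      exact Finset.sum_congr rfl fun j _ => by ring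
    rw [Nrm_sq]
    rw [h3] at h2
    linarith
  -- telescoping
  have htel : ∑ t ∈ range T, ((∑ j, (x t j - y j)^2) - (∑ j, (x (t+1) j - y j)^2))
      = (∑ j, (x 0 j - y j)^2) - (∑ j, (x T j - y j)^2) :=
    Finset.sum_range_sub' (fun t => ∑ j, (x t j - y j)^2) T
  have hsum1 : 2*η*(∑ t ∈ range T, ∑ j, h t j * (x t j - y j))
      ≤ (∑ j, (x 0 j - y j)^2) + η^2 * ∑ t ∈ range T, Nrm (h t)^2 := by
    rw [Finset.mul_sum]
    calc ∑ t ∈ range T, 2*η*(∑ j, h t j * (x t j - y j))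
        ≤ ∑ t ∈ range T, (((∑ j, (x t j - y j)^2) - (∑ j, (x (t+1) j - y j)^2))
            + η^2 * Nrm (h t)^2) :=
          Finset.sum_le_sum fun t ht => hdesc t (Finset.mem_range.1 ht)
      _ = ((∑ j, (x 0 j - y j)^2) - (∑ j, (x T j - y j)^2))
            + η^2 * ∑ t ∈ range T, Nrm (h t)^2 := by
          rw [Finset.sum_add_distrib, htel, Finset.mul_sum]
      _ ≤ _ := by
          have hnn : (0:ℝ) ≤ ∑ j, (x T j - y j)^2 := by positivity
          linarith
  -- step-size move bound
  have hmove : ∀ t < T, Nrm (x (t+1) - x t) ≤ η * (G * c t) := by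
    intro t ht
    have hco : ∀ j : Fin n, ((x (t+1) - x t) j)^2 ≤ (η * h t j)^2 := by
      intro j
      have hb := hbox t (le_of_lt ht) j
      calc ((x (t+1) - x t) j)^2 = (max 0 (min 1 (x t j - η * h t j)) - x t j)^2 := by
            rw [Pi.sub_apply, hrec' t ht j]
        _ ≤ ((x t j - η * h t j) - x t j)^2 := clip_sq' _ _ hb.1 hb.2
        _ = (η * h t j)^2 := by ring
    have h4 : (∑ j : Fin n, (η * h t j)^2) = η^2 * ∑ j, h t j^2 := by
      rw [Finset.mul_sum]; exact Finset.sum_congr rfl fun j _ => by ring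
    have h5 : Real.sqrt (η^2 * ∑ j, h t j^2) = η * Nrm (h t) := by
      rw [Real.sqrt_mul (sq_nonneg η), Real.sqrt_sq hη.le]; rfl
    calc Nrm (x (t+1) - x t) ≤ Real.sqrt (∑ j : Fin n, (η * h t j)^2) :=
          Real.sqrt_le_sqrt (Finset.sum_le_sum fun j _ => hco j)
      _ = η * Nrm (h t) := by rw [h4, h5]
      _ ≤ η * (G * c t) := mul_le_mul_of_nonneg_left (hNh t) hη.le
  -- drift bound
  have hdrift : ∀ k t, k ≤ t → t ≤ T → Nrm (x k - x t) ≤ η * G * ∑ s ∈ Ico k t, c s := by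
    intro k t hkt
    induction t, hkt using Nat.le_induction with
    | base => intro _; simp [Nrm]
    | succ t hkt ih =>
      intro hT1
      have h1 := ih (by omega)
      have h2 := hmove t (by omega)
      have h3 : Nrm (x k - x (t+1)) ≤ Nrm (x k - x t) + Nrm (x (t+1) - x t) := by
        have htr := Nrm_triangle (x k - x t) (x (t+1) - x t)
        have he : x k - x t - (x (t+1) - x t) = x k - x (t+1) := by
          funext j; simp only [Pi.sub_apply]; ring
        rwa [he] at htr
      rw [Finset.sum_Ico_succ_top hkt, mul_add]
      have : η * (G * c t) = η * G * c t := by ring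
      linarith [this ▸ h2]
  -- split the regret
  have hsplitt : ∑ t ∈ range T, ∑ j, g t j * (x t j - y j)
      = (∑ t ∈ range T, ∑ j, g t j * (x (t + d t - 1) j - y j))
        + ∑ t ∈ range T, ∑ j, g t j * (x t j - x (t + d t - 1) j) := by
    rw [← Finset.sum_add_distrib]
    refine Finset.sum_congr rfl fun t _ => ?_
    rw [← Finset.sum_add_distrib]
    exact Finset.sum_congr rfl fun j _ => by ring
  -- fiberwise reindexing
  have hA1 : ∑ t ∈ range T, ∑ j, g t j * (x (t + d t - 1) j - y j)
      = ∑ t ∈ range T, ∑ j, h t j * (x t j - y j) := by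
    rw [← Finset.sum_fiberwise_of_maps_to (g := fun k => k + d k - 1)
        (f := fun k => ∑ j, g k j * (x (k + d k - 1) j - y j))
        (fun k hk => Finset.mem_range.2 (hrk k (Finset.mem_range.1 hk)).2)]
    refine Finset.sum_congr rfl fun t ht => ?_
    have hstep1 : ∀ k ∈ (range T).filter (fun k => k + d k - 1 = t),
        (∑ j, g k j * (x (k + d k - 1) j - y j)) = ∑ j, g k j * (x t j - y j) := by
      intro k hk; rw [(Finset.mem_filter.1 hk).2]
    rw [Finset.sum_congr rfl hstep1, Finset.sum_comm]
    refine Finset.sum_congr rfl fun j _ => ?_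
    rw [← Finset.sum_mul, hh]
  -- drift term bound
  have hA2 : ∑ t ∈ range T, ∑ j, g t j * (x t j - x (t + d t - 1) j)
      ≤ η * G^2 * ∑ t ∈ range T, ∑ s ∈ Ico t (t + d t - 1), c s := by
    rw [Finset.mul_sum]
    refine Finset.sum_le_sum fun t ht => ?_
    have ht' := Finset.mem_range.1 ht
    have h1 : (∑ j, g t j * (x t j - x (t + d t - 1) j))
        ≤ Nrm (g t) * Nrm (x t - x (t + d t - 1)) := Nrm_CS (g t) _
    have h2 := hdrift t (t + d t - 1) (hrk t ht').1 (le_of_lt (hrk t ht').2)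
    calc (∑ j, g t j * (x t j - x (t + d t - 1) j))
        ≤ Nrm (g t) * Nrm (x t - x (t + d t - 1)) := h1
      _ ≤ G * (η * G * ∑ s ∈ Ico t (t + d t - 1), c s) :=
          mul_le_mul (hNg t ht') h2 (Nrm_nonneg _) hG.le
      _ = η * G^2 * ∑ s ∈ Ico t (t + d t - 1), c s := by ring
  -- second-moment bound
  have hSQ : ∑ t ∈ range T, Nrm (h t)^2 ≤ G^2 * ∑ t ∈ range T, c t^2 := by
    rw [Finset.mul_sum]
    refine Finset.sum_le_sum fun t _ => ?_
    calc Nrm (h t)^2 ≤ (G * c t)^2 := pow_le_pow_left₀ (Nrm_nonneg _) (hNh t) 2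
      _ = G^2 * c t^2 := by ring
  -- combinatorial bound
  have hcomb := comb T (fun k => k + d k - 1) hrk
  have hdsum : (∑ k ∈ range T, (((k + d k - 1) - k : ℕ) : ℝ)) ≤ ∑ k ∈ range T, (d k : ℝ) := by
    refine Finset.sum_le_sum fun k hk => ?_
    have := hd k (Finset.mem_range.1 hk)
    exact Nat.cast_le.2 (by omega)
  have hcomb' : (1/2 : ℝ) * (∑ t ∈ range T, c t^2)
      + (∑ t ∈ range T, ∑ s ∈ Ico t (t + d t - 1), c s)
      ≤ (T:ℝ)/2 + ∑ k ∈ range T, (d k : ℝ) := by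
    calc (1/2 : ℝ) * (∑ t ∈ range T, c t^2)
        + (∑ t ∈ range T, ∑ s ∈ Ico t (t + d t - 1), c s)
        ≤ (T:ℝ)/2 + ∑ k ∈ range T, (((k + d k - 1) - k : ℕ) : ℝ) := hcomb
      _ ≤ (T:ℝ)/2 + ∑ k ∈ range T, (d k : ℝ) := by linarith [hdsum]
  -- final assembly
  have h2η : (0:ℝ) < 2*η := by linarith
  have hT1b : (∑ t ∈ range T, ∑ j, h t j * (x t j - y j))
      ≤ ((∑ j, (x 0 j - y j)^2) + η^2 * ∑ t ∈ range T, Nrm (h t)^2) / (2*η) :=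
    (le_div_iff₀ h2η).2 (by linarith [hsum1])
  have hdiveq : ((∑ j, (x 0 j - y j)^2) + η^2 * ∑ t ∈ range T, Nrm (h t)^2) / (2*η)
      = (∑ j, (x 0 j - y j)^2) / (2*η) + (η/2) * ∑ t ∈ range T, Nrm (h t)^2 := by
    field_simp
  have hmul1 : (η/2) * (∑ t ∈ range T, Nrm (h t)^2) ≤ (η/2) * (G^2 * ∑ t ∈ range T, c t^2) :=
    mul_le_mul_of_nonneg_left hSQ (by linarith)
  have hpos : (0:ℝ) ≤ η * G^2 := by positivity
  have hmul2 : η * G^2 * ((1/2 : ℝ) * (∑ t ∈ range T, c t^2)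
        + (∑ t ∈ range T, ∑ s ∈ Ico t (t + d t - 1), c s))
      ≤ η * G^2 * ((T:ℝ)/2 + ∑ k ∈ range T, (d k : ℝ)) :=
    mul_le_mul_of_nonneg_left hcomb' hpos
  rw [hsplitt, hA1]
  rw [hdiveq] at hT1b
  nlinarith [hT1b, hA2, hmul1, hmul2]
end
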